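/- For every integer p ≥ 1, C_p = (−1)^p · [ Σ_{m=1}^{⌊p/2⌋} 2^{2m+1}·binom(2p−2m−1, p−1)·ζ(2m) − binom(2p−1, p−1) − 2^{2p−1} ], where ζ denotes the Riemann zeta function. -/

import Mathlib

/-!
Put `u = -(n + 1) / 2` and `v = (n + 3) / 2`, so that `u + v = 1`. The identity
`u ^ p * ∑_{i < p} C(p - 1 + i, i) v ^ i + v ^ p * ∑_{i < p} C(p - 1 + i, i) u ^ i = 1`,
divided by `(u v) ^ p`, is the partial fraction expansion
`4 ^ p / ((n + 1) ^ p (n + 3) ^ p) =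
  (-1) ^ p ∑_{i < p} C(p - 1 + i, i) ((-2 / (n + 1)) ^ (p - i) + (2 / (n + 3)) ^ (p - i))`.
Summed over `n`, the power `k = p - i` contributes `((-2) ^ k + 2 ^ k) ζ(k) - 2 ^ k - 1`
(for `k = 1` the series telescopes), so only even `k` keep a zeta value, while the constant terms
add up by the hockey-stick identity and by the case `u = v = 1 / 2` of the identity above.
-/

open Real

/-- `C p = Σ_{n=1}^∞ 2^{2p}/(n^p (n+2)^p)`. -/
noncomputable def C (p : ℕ) : ℝ :=
  ∑' n : ℕ, (2 : ℝ) ^ (2 * p) / (((n : ℝ) + 1) ^ p * ((n : ℝ) + 3) ^ p)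

open Finset Filter Topology

section BinomialIdentity

variable {R : Type*} [CommRing R]

theorem one_sub_mul_sum_range_choose_succ (q : ℕ) (v : R) :
    (1 - v) * ∑ i ∈ range (q + 2), ((q + 1 + i).choose i : R) * v ^ i =
      ∑ i ∈ range (q + 1), ((q + i).choose i : R) * v ^ i +
        (2 * q + 1).choose q * v ^ (q + 1) * (1 - 2 * v) := by
  have pascal : ∑ i ∈ range (q + 1 + 1), ((q + 1 + i).choose i : R) * v ^ i =
      1 + ∑ j ∈ range (q + 1), ((q + 1 + j).choose j : R) * v ^ (j + 1) +
        ∑ j ∈ range (q + 1), ((q + (j + 1)).choose (j + 1) : R) * v ^ (j + 1) := by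
    rw [add_assoc (1 : R), ← sum_add_distrib, sum_range_succ', add_comm]
    congr 1
    · simp
    · refine sum_congr rfl fun j _ => ?_
      rw [show q + 1 + (j + 1) = q + 1 + j + 1 by ring, Nat.choose_succ_succ',
        show q + 1 + j = q + (j + 1) by ring]
      push_cast; ring
  have shift : ∑ i ∈ range (q + 1 + 1), ((q + i).choose i : R) * v ^ i =
      1 + ∑ j ∈ range (q + 1), ((q + (j + 1)).choose (j + 1) : R) * v ^ (j + 1) := by
    rw [sum_range_succ', add_comm]
    simp
  have shift_mul : v * ∑ i ∈ range (q + 1 + 1), ((q + 1 + i).choose i : R) * v ^ i =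
      ∑ j ∈ range (q + 1), ((q + 1 + j).choose j : R) * v ^ (j + 1) +
        (2 * q + 2).choose (q + 1) * v ^ (q + 2) := by
    rw [mul_sum, sum_range_succ, show q + 1 + (q + 1) = 2 * q + 2 by ring]
    congr 1
    · exact sum_congr rfl fun j _ => by ring
    · ring
  have central : (2 * q + 2).choose (q + 1) = 2 * (2 * q + 1).choose q := by
    rw [Nat.choose_succ_succ', Nat.choose_symm_half]; ring
  rw [sum_range_succ, show q + (q + 1) = 2 * q + 1 by ring, Nat.choose_symm_half] at shift
  rw [central] at shift_mul
  push_cast at shift_mul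
  rw [sub_mul, one_mul, shift_mul, pascal]
  linear_combination -shift

theorem pow_mul_sum_choose_add_pow_mul_sum_choose {u v : R} (h : u + v = 1) (q : ℕ) :
    u ^ (q + 1) * ∑ i ∈ range (q + 1), ((q + i).choose i : R) * v ^ i +
      v ^ (q + 1) * ∑ i ∈ range (q + 1), ((q + i).choose i : R) * u ^ i = 1 := by
  induction q with
  | zero => simpa using h
  | succ q ih =>
    have hu := one_sub_mul_sum_range_choose_succ q v
    have hv := one_sub_mul_sum_range_choose_succ q u
    rw [← eq_sub_of_add_eq h] at hu
    rw [← eq_sub_of_add_eq' h] at hv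
    -- the correction terms `c (u v) ^ (q + 1) (1 - 2 v)` and `c (u v) ^ (q + 1) (1 - 2 u)` cancel
    linear_combination u ^ (q + 1) * hu + v ^ (q + 1) * hv + ih
      - 2 * (2 * q + 1).choose q * (u * v) ^ (q + 1) * h

end BinomialIdentity

theorem inv_mul_pow_eq_sum_choose {K : Type*} [Field K] {u v : K} (hu : u ≠ 0) (hv : v ≠ 0)
    (h : u + v = 1) (q : ℕ) :
    (u * v)⁻¹ ^ (q + 1) =
      ∑ i ∈ range (q + 1), ((q + i).choose i : K) * (u⁻¹ ^ (q + 1 - i) + v⁻¹ ^ (q + 1 - i)) := by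
  have inv_pow_mul_pow {w : K} (hw : w ≠ 0) {i : ℕ} (hi : i ∈ range (q + 1)) :
      w⁻¹ ^ (q + 1) * w ^ i = w⁻¹ ^ (q + 1 - i) := by
    rw [pow_sub₀ _ (inv_ne_zero hw) (by grind), ← inv_pow, inv_inv]
  calc (u * v)⁻¹ ^ (q + 1)
      = (u * v)⁻¹ ^ (q + 1) * (u ^ (q + 1) * ∑ i ∈ range (q + 1), ((q + i).choose i : K) * v ^ i +
          v ^ (q + 1) * ∑ i ∈ range (q + 1), ((q + i).choose i : K) * u ^ i) := by
        rw [pow_mul_sum_choose_add_pow_mul_sum_choose h, mul_one]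
    _ = v⁻¹ ^ (q + 1) * ∑ i ∈ range (q + 1), ((q + i).choose i : K) * v ^ i +
          u⁻¹ ^ (q + 1) * ∑ i ∈ range (q + 1), ((q + i).choose i : K) * u ^ i := by
        have hu' : (u * v)⁻¹ ^ (q + 1) * u ^ (q + 1) = v⁻¹ ^ (q + 1) := by
          rw [mul_inv, mul_pow, mul_right_comm, ← mul_pow, inv_mul_cancel₀ hu, one_pow, one_mul]
        have hv' : (u * v)⁻¹ ^ (q + 1) * v ^ (q + 1) = u⁻¹ ^ (q + 1) := by
          rw [mul_inv, mul_pow, mul_assoc, ← mul_pow, inv_mul_cancel₀ hv, one_pow, mul_one]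
        rw [mul_add, ← mul_assoc, ← mul_assoc, hu', hv']
    _ = _ := by
        rw [mul_sum, mul_sum, ← sum_add_distrib]
        refine sum_congr rfl fun i hi => ?_
        rw [mul_left_comm, inv_pow_mul_pow hv hi, mul_left_comm, inv_pow_mul_pow hu hi]
        ring

theorem sum_range_choose_add_mul_two_pow (q : ℕ) :
    ∑ i ∈ range (q + 1), (q + i).choose i * 2 ^ (q + 1 - i) = 2 ^ (2 * q + 1) := by
  qify
  apply mul_left_cancel₀ (two_ne_zero : (2 : ℚ) ≠ 0)
  calc 2 * ∑ i ∈ range (q + 1), ((q + i).choose i : ℚ) * 2 ^ (q + 1 - i)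
      = ∑ i ∈ range (q + 1),
          ((q + i).choose i : ℚ) * (2⁻¹⁻¹ ^ (q + 1 - i) + 2⁻¹⁻¹ ^ (q + 1 - i)) := by
        simp only [inv_inv, mul_sum]
        exact sum_congr rfl fun i _ => by ring
    _ = (2⁻¹ * 2⁻¹)⁻¹ ^ (q + 1) :=
        (inv_mul_pow_eq_sum_choose (by norm_num) (by norm_num) (by norm_num) q).symm
    _ = 2 * 2 ^ (2 * q + 1) := by
        rw [← mul_inv, inv_inv, show (2 : ℚ) * 2 = 2 ^ 2 by norm_num, ← pow_mul]
        ring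

theorem hasSum_sub_succ_of_antitone {f : ℕ → ℝ} (hf : Antitone f) {l : ℝ}
    (hl : Tendsto f atTop (𝓝 l)) : HasSum (fun n => f n - f (n + 1)) (f 0 - l) := by
  rw [hasSum_iff_tendsto_nat_of_nonneg (fun n => sub_nonneg.2 (hf n.le_succ))]
  simp_rw [sum_range_sub']
  exact hl.const_sub _

theorem hasSum_two_div_sub_two_div : HasSum (fun n : ℕ => 2 / ((n : ℝ) + 1) - 2 / (n + 3)) 3 := by
  set f : ℕ → ℝ := fun n => 2 / ((n : ℝ) + 1) + 2 / (n + 2)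
  have hf : Antitone f := fun m n hmn => by
    have : (m : ℝ) ≤ n := by exact_mod_cast hmn
    dsimp only [f]; gcongr
  have hl : Tendsto f atTop (𝓝 0) := by
    have h1 := (tendsto_add_atTop_iff_nat 1).2 (tendsto_const_div_atTop_nhds_zero_nat (2 : ℝ))
    have h2 := (tendsto_add_atTop_iff_nat 2).2 (tendsto_const_div_atTop_nhds_zero_nat (2 : ℝ))
    simpa [f] using h1.add h2
  convert hasSum_sub_succ_of_antitone hf hl using 1
  · ext n; push_cast [f]; ring
  · norm_num [f]

theorem two_pow_div_eq_neg_one_pow_mul_sum_choose {K : Type*} [Field K] [NeZero (2 : K)]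
    {x : K} (h1 : x + 1 ≠ 0) (h3 : x + 3 ≠ 0) (q : ℕ) :
    2 ^ (2 * (q + 1)) / ((x + 1) ^ (q + 1) * (x + 3) ^ (q + 1)) =
      (-1) ^ (q + 1) * ∑ i ∈ range (q + 1),
        ((q + i).choose i : K) * ((-2 / (x + 1)) ^ (q + 1 - i) + (2 / (x + 3)) ^ (q + 1 - i)) := by
  have h2 : (2 : K) ≠ 0 := two_ne_zero
  have hu : (x + 1) / -2 ≠ 0 := div_ne_zero h1 (neg_ne_zero.2 h2)
  have hv : (x + 3) / 2 ≠ 0 := div_ne_zero h3 h2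
  have huv : (x + 1) / -2 + (x + 3) / 2 = 1 := by field_simp; ring
  have hinv : ((x + 1) / -2 * ((x + 3) / 2))⁻¹ = -(2 ^ 2 / ((x + 1) * (x + 3))) := by
    field_simp
  have h := inv_mul_pow_eq_sum_choose hu hv huv q
  rw [inv_div, inv_div, hinv] at h
  rw [← h, neg_pow (2 ^ 2 / _), ← mul_assoc, ← pow_add, Even.neg_one_pow ⟨_, rfl⟩, one_mul,
    div_pow, mul_pow, ← pow_mul]

theorem hasSum_one_div_nat_add_one_pow {k : ℕ} (hk : 1 < k) :
    HasSum (fun n : ℕ => 1 / ((n : ℂ) + 1) ^ k) (riemannZeta k) := by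
  have hs : Summable (fun n : ℕ => 1 / (n : ℂ) ^ k) := by
    simpa using Complex.summable_one_div_nat_cpow.2 (by simpa using hk : 1 < ((k : ℂ)).re)
  have h := (hasSum_nat_add_iff' 1).2 (zeta_nat_eq_tsum_of_gt_one hk ▸ hs.hasSum)
  simpa [zero_pow (by omega : k ≠ 0)] using h

theorem hasSum_neg_two_div_pow_add_two_div_pow {k : ℕ} (hk : 1 ≤ k) :
    HasSum (fun n : ℕ => (-2 / ((n : ℂ) + 1)) ^ k + (2 / ((n : ℂ) + 3)) ^ k)
      (((-2) ^ k + 2 ^ k) * riemannZeta k - 2 ^ k - 1) := by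
  obtain rfl | hk := hk.eq_or_lt
  · have h := (Complex.hasSum_ofReal.2 hasSum_two_div_sub_two_div).neg
    push_cast at h
    rw [show ((-2) ^ 1 + 2 ^ 1) * riemannZeta ((1 : ℕ) : ℂ) - 2 ^ 1 - 1 = -3 by ring]
    exact h.congr_fun fun n => by ring
  have h1 := hasSum_one_div_nat_add_one_pow hk
  have h3 := (hasSum_nat_add_iff' 2).2 h1
  have h := (h1.mul_left ((-2) ^ k)).add (h3.mul_left (2 ^ k))
  push_cast at h
  rw [show ((-2) ^ k + 2 ^ k) * riemannZeta k - 2 ^ k - 1 =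
      (-2) ^ k * riemannZeta k + 2 ^ k * (riemannZeta k - ∑ i ∈ range 2, 1 / ((i : ℂ) + 1) ^ k) by
    simp only [one_div, sum_range_succ, range_one, sum_singleton, CharP.cast_eq_zero, zero_add,
      one_pow, inv_one, Nat.cast_one]
    field_simp
    ring]
  exact h.congr_fun fun n => by ring

theorem sum_range_ite_even_sub {M : Type*} [AddCommMonoid M] (n : ℕ) (F : ℕ → M) :
    ∑ i ∈ range n, (if Even (n - i) then F (n - i) else 0) = ∑ m ∈ Icc 1 (n / 2), F (2 * m) := by
  rw [← sum_filter]
  refine sum_nbij' (fun i => (n - i) / 2) (fun m => n - 2 * m) ?_ ?_ ?_ ?_ ?_ <;>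
    intro i hi <;> simp only [mem_filter, mem_range, mem_Icc, Nat.even_iff] at hi ⊢
  any_goals omega
  congr 1; omega

theorem neg_two_pow_add_two_pow {R : Type*} [Ring R] (k : ℕ) :
    (-2 : R) ^ k + 2 ^ k = if Even k then 2 ^ (k + 1) else 0 := by
  split_ifs with hk
  · rw [hk.neg_pow, pow_succ, mul_two]
  · rw [(Nat.not_even_iff_odd.1 hk).neg_pow, neg_add_cancel]

theorem sum_range_choose_mul_zeta_combination (q : ℕ) :
    ∑ i ∈ range (q + 1), ((q + i).choose i : ℂ) *
        (((-2) ^ (q + 1 - i) + 2 ^ (q + 1 - i)) * riemannZeta (q + 1 - i : ℕ) -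
          2 ^ (q + 1 - i) - 1) =
      ∑ m ∈ Icc 1 ((q + 1) / 2),
          2 ^ (2 * m + 1) * ((2 * q + 1 - 2 * m).choose q : ℂ) * riemannZeta (2 * m) -
        (2 * q + 1).choose q - 2 ^ (2 * q + 1) := by
  have hockey : ∑ i ∈ range (q + 1), (q + i).choose i = (2 * q + 1).choose q := by
    rw [← Nat.choose_symm_half, two_mul, ← Nat.sum_range_add_choose]
    exact sum_congr rfl fun i _ => by rw [add_comm, Nat.choose_symm_add]
  have even_part := sum_range_ite_even_sub (q + 1)
    fun k => 2 ^ (k + 1) * ((2 * q + 1 - k).choose q : ℂ) * riemannZeta k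
  push_cast at even_part
  have two_pow :
      (2 : ℂ) ^ (2 * q + 1) = ∑ i ∈ range (q + 1), ((q + i).choose i : ℂ) * 2 ^ (q + 1 - i) := by
    exact_mod_cast (sum_range_choose_add_mul_two_pow q).symm
  rw [← even_part, ← hockey, Nat.cast_sum, two_pow]
  simp only [mul_sub, sum_sub_distrib, mul_one]
  rw [sub_right_comm]
  congr 2
  refine sum_congr rfl fun i hi => ?_
  rw [neg_two_pow_add_two_pow]
  split_ifs
  · rw [show 2 * q + 1 - (q + 1 - i) = q + i by grind, Nat.choose_symm_add]
    ring
  · simp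

theorem C_eq_zeta_combination (p : ℕ) (hp : 1 ≤ p) :
    (C p : ℂ) = (-1 : ℂ) ^ p *
      ((∑ m ∈ Finset.Icc 1 (p / 2),
          (2 : ℂ) ^ (2 * m + 1) * (Nat.choose (2 * p - 2 * m - 1) (p - 1) : ℂ) *
            riemannZeta (2 * m))
        - (Nat.choose (2 * p - 1) (p - 1) : ℂ) - (2 : ℂ) ^ (2 * p - 1)) := by
  obtain ⟨q, rfl⟩ := Nat.exists_eq_add_of_le' hp
  have hsum := (hasSum_sum (s := range (q + 1)) fun i hi =>
    (hasSum_neg_two_div_pow_add_two_div_pow (k := q + 1 - i) (by grind)).mul_left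
      ((q + i).choose i : ℂ)).mul_left ((-1) ^ (q + 1))
  have hterm (n : ℕ) := two_pow_div_eq_neg_one_pow_mul_sum_choose (K := ℂ) (x := n)
    (Nat.cast_add_one_ne_zero n) (by exact_mod_cast (n + 2).succ_ne_zero) q
  rw [C, Complex.ofReal_tsum]
  push_cast
  rw [tsum_congr hterm, hsum.tsum_eq, sum_range_choose_mul_zeta_combination]
  congr 3
  exact sum_congr rfl fun m _ => by rw [show 2 * (q + 1) - 2 * m - 1 = 2 * q + 1 - 2 * m by omega]
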